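/- arXiv:2406.18973 — 6 statements merged into one kernel-verified Lean document; each statement's English description precedes it below -/
import Mathlib

section
/- Let A₁, A₂ be Schur stable n×n real matrices. Then (−1)ⁿ det(αA₁ + (1−α)A₂ − I) > 0 for all α ∈ [0,1] if and only if the matrix (I − A₁)(I − A₂)⁻¹ has no negative real eigenvalue. -/
/-!
Put `Bᵢ = 1 - Aᵢ` and `f α = det (α • B₁ + (1 - α) • B₂)`, which equals
`(-1)ⁿ det (α • A₁ + (1 - α) • A₂ - 1)`.
Schur stability leaves the monic characteristic polynomial of `Aᵢ` without real roots `≥ 1`, so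
`f 1 = det B₁` and `f 0 = det B₂` are positive, and by the intermediate value theorem `f > 0`
on `[0, 1]` iff `f` has no zero in `(0, 1)`. For `α ∈ (0, 1)`,
`α • B₁ + (1 - α) • B₂ = α • (B₁ - λ • B₂)` with `λ = 1 - α⁻¹`, a bijection `(0, 1) → (-∞, 0)`,
and `det (B₁ - λ • B₂) = 0` iff `λ` is an eigenvalue of `B₁ * B₂⁻¹`.
-/

open Matrix

theorem IsPreconnected.forall_pos_iff_forall_ne_zero {X α : Type*} [TopologicalSpace X]
    [TopologicalSpace α] [LinearOrder α] [OrderClosedTopology α] [Zero α] {s : Set X}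
    (hs : IsPreconnected s) {f : X → α} (hf : ContinuousOn f s) {a : X} (ha : a ∈ s)
    (hfa : 0 < f a) : (∀ x ∈ s, 0 < f x) ↔ ∀ x ∈ s, f x ≠ 0 := by
  refine ⟨fun h x hx => (h x hx).ne', fun h x hx => ?_⟩
  by_contra! hneg
  obtain ⟨y, hy, hfy⟩ := hs.intermediate_value hx ha hf ⟨hneg, hfa.le⟩
  exact h y hy hfy

theorem smul_add_one_sub_smul_eq_smul_sub_smul {K M : Type*} [Field K] [AddCommGroup M]
    [Module K M] {α : K} (hα : α ≠ 0) (x y : M) :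
    α • x + (1 - α) • y = α • (x - (1 - α⁻¹) • y) := by
  rw [smul_sub, smul_smul, mul_sub, mul_inv_cancel₀ hα, mul_one]
  module

section Field

variable {ι K : Type*} [Fintype ι] [DecidableEq ι] [Field K]

theorem Matrix.det_sub_smul_eq_zero_iff {A B : Matrix ι ι K} (hB : IsUnit B.det) (t : K) :
    (A - t • B).det = 0 ↔ (t • 1 - A * B⁻¹).det = 0 := by
  have h : t • 1 - A * B⁻¹ = -((A - t • B) * B⁻¹) := by
    rw [sub_mul, smul_mul, mul_nonsing_inv _ hB]
    abel
  rw [h, det_neg, det_mul]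
  simp [hB.ne_zero]

theorem Matrix.det_smul_add_one_sub_smul_eq_zero_iff {α : K} (hα : α ≠ 0) (A B : Matrix ι ι K) :
    (α • A + (1 - α) • B).det = 0 ↔ (A - (1 - α⁻¹) • B).det = 0 := by
  rw [smul_add_one_sub_smul_eq_smul_sub_smul hα, det_smul]
  simp [hα]

theorem Matrix.exists_mem_Ioo_det_smul_add_one_sub_smul_eq_zero_iff [LinearOrder K]
    [IsStrictOrderedRing K] (A B : Matrix ι ι K) :
    (∃ α ∈ Set.Ioo (0 : K) 1, (α • A + (1 - α) • B).det = 0) ↔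
      ∃ t : K, t < 0 ∧ (A - t • B).det = 0 := by
  constructor
  · rintro ⟨α, ⟨hα₀, hα₁⟩, hdet⟩
    refine ⟨1 - α⁻¹, ?_, (det_smul_add_one_sub_smul_eq_zero_iff hα₀.ne' A B).mp hdet⟩
    linarith [(one_lt_inv₀ hα₀).mpr hα₁]
  · rintro ⟨t, ht, hdet⟩
    have ht₁ : 0 < 1 - t := by linarith
    refine ⟨(1 - t)⁻¹, ⟨inv_pos.mpr ht₁, inv_lt_one_of_one_lt₀ (by linarith)⟩, ?_⟩
    rwa [det_smul_add_one_sub_smul_eq_zero_iff (inv_ne_zero ht₁.ne'), inv_inv, sub_sub_cancel]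

end Field

def Matrix.IsSchurStable {ι : Type*} [Fintype ι] [DecidableEq ι] (A : Matrix ι ι ℝ) : Prop :=
  ∀ lam : ℂ, (lam • (1 : Matrix ι ι ℂ) - A.map Complex.ofReal).det = 0 → ‖lam‖ < 1

namespace Matrix.IsSchurStable

variable {ι : Type*} [Fintype ι] [DecidableEq ι] {A : Matrix ι ι ℝ}

theorem lt_one_of_isRoot_charpoly (hA : A.IsSchurStable) {y : ℝ} (hy : A.charpoly.IsRoot y) :
    y < 1 := by
  have hdet : ((y : ℂ) • (1 : Matrix ι ι ℂ) - A.map Complex.ofReal).det = 0 := by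
    have hmap : A.map Complex.ofReal = A.map Complex.ofRealHom := rfl
    rw [smul_one_eq_diagonal, ← scalar_apply, ← eval_charpoly, ← Complex.ofRealHom_eq_coe, hmap,
      charpoly_map, Polynomial.eval_map_apply, hy.eq_zero, map_zero]
  have := hA _ hdet
  rw [Complex.norm_real, Real.norm_eq_abs] at this
  exact (le_abs_self y).trans_lt this

theorem det_one_sub_pos (hA : A.IsSchurStable) : 0 < (1 - A).det := by
  have h := Polynomial.zero_lt_eval_of_roots_lt_of_leadingCoeff_nonneg
    (fun y hy => hA.lt_one_of_isRoot_charpoly hy) (by simp [(charpoly_monic A).leadingCoeff])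
  rwa [eval_charpoly, map_one] at h

end Matrix.IsSchurStable

theorem lemma1_det_pos_iff_no_neg_eigenvalue (n : ℕ) (A₁ A₂ : Matrix (Fin n) (Fin n) ℝ)
    (h₁ : ∀ lam : ℂ, Matrix.det (lam • (1 : Matrix (Fin n) (Fin n) ℂ) - A₁.map Complex.ofReal) = 0 →
      ‖lam‖ < 1)
    (h₂ : ∀ lam : ℂ, Matrix.det (lam • (1 : Matrix (Fin n) (Fin n) ℂ) - A₂.map Complex.ofReal) = 0 →
      ‖lam‖ < 1) :
    (∀ α ∈ Set.Icc (0 : ℝ) 1,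
        0 < (-1 : ℝ) ^ n * Matrix.det (α • A₁ + (1 - α) • A₂ - 1)) ↔
      ¬ ∃ lam : ℝ, lam < 0 ∧
        Matrix.det (lam • (1 : Matrix (Fin n) (Fin n) ℝ) - (1 - A₁) * (1 - A₂)⁻¹) = 0 := by
  set B₁ := 1 - A₁
  set B₂ := 1 - A₂
  have hB₁ : 0 < B₁.det := IsSchurStable.det_one_sub_pos h₁
  have hB₂ : 0 < B₂.det := IsSchurStable.det_one_sub_pos h₂
  have hsign (α : ℝ) :
      (-1 : ℝ) ^ n * (α • A₁ + (1 - α) • A₂ - 1).det = (α • B₁ + (1 - α) • B₂).det := by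
    have hneg : α • B₁ + (1 - α) • B₂ = -(α • A₁ + (1 - α) • A₂ - 1) := by
      simp only [B₁, B₂]
      module
    rw [hneg, det_neg, Fintype.card_fin]
  have hcont : Continuous fun α : ℝ => (α • B₁ + (1 - α) • B₂).det := by fun_prop
  simp_rw [hsign, isPreconnected_Icc.forall_pos_iff_forall_ne_zero hcont.continuousOn
    (Set.left_mem_Icc.mpr zero_le_one) (by simpa using hB₂)]
  simp_rw [← det_sub_smul_eq_zero_iff (isUnit_iff_ne_zero.mpr hB₂.ne'),
    ← exists_mem_Ioo_det_smul_add_one_sub_smul_eq_zero_iff]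
  constructor
  · rintro h ⟨α, hα, hzero⟩
    exact h α (Set.Ioo_subset_Icc_self hα) hzero
  · intro h α hα
    rcases Set.eq_endpoints_or_mem_Ioo_of_mem_Icc hα with rfl | rfl | hα'
    · simpa using hB₂.ne'
    · simpa using hB₁.ne'
    · exact fun hzero => h ⟨α, hα', hzero⟩
end

section
/- Let A₁, A₂ be Schur stable n×n real matrices and C(α) = αA₁ + (1−α)A₂. Then det(C(α) + I) > 0 for all α ∈ [0,1] if and only if (I + A₁)(I + A₂)⁻¹ has no negative real eigenvalue. -/
/-!
With `M = (1 + A₁) * (1 + A₂)⁻¹` we have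
`α • A₁ + (1 - α) • A₂ + 1 = (α • M + (1 - α) • 1) * (1 + A₂)`, and `α • M + (1 - α) • 1` is
singular exactly when `-(1 - α) / α ≤ 0` is an eigenvalue of `M`. A determinant that does not
vanish along the segment from `1` keeps the sign of `det 1 = 1` by the intermediate value theorem.
Applied to `M = 1 + A`, this gives `0 < det (1 + A)` for Schur stable `A`, since `A` has no
eigenvalue `≤ -1`.
-/

open Matrix Complex

theorem IsPreconnected.pos_of_forall_ne_zero {X α : Type*} [TopologicalSpace X]
    [TopologicalSpace α] [LinearOrder α] [OrderClosedTopology α] [Zero α] {s : Set X}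
    (hs : IsPreconnected s) {f : X → α} (hf : ContinuousOn f s) (hne : ∀ x ∈ s, f x ≠ 0)
    {a : X} (ha : a ∈ s) (hfa : 0 < f a) {x : X} (hx : x ∈ s) : 0 < f x := by
  by_contra! hfx
  obtain ⟨y, hy, hfy⟩ := hs.intermediate_value hx ha hf ⟨hfx, hfa.le⟩
  exact hne y hy hfy

section

variable {ι K : Type*} [Fintype ι] [DecidableEq ι]

-- `α • M + (1 - α) • 1 = α • (M - μ • 1)` with `α = (1 - μ)⁻¹`, a bijection `(-∞, 0] ≃ (0, 1]`.
theorem forall_det_smul_add_one_sub_smul_ne_zero_iff [Field K] [LinearOrder K]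
    [IsStrictOrderedRing K] (M : Matrix ι ι K) :
    (∀ α ∈ Set.Icc (0 : K) 1, (α • M + (1 - α) • 1).det ≠ 0) ↔
      ∀ μ ≤ (0 : K), (μ • 1 - M).det ≠ 0 := by
  have segment_eq : ∀ α μ : K, α * (1 - μ) = 1 →
      α • M + (1 - α) • 1 = (-α) • (μ • 1 - M) := by
    intro α μ h
    rw [show 1 - α = -(α * μ) by linear_combination -h]
    module
  constructor
  · intro h μ hμ hdet
    have hαμ : (1 - μ)⁻¹ * (1 - μ) = 1 := inv_mul_cancel₀ (by linarith)
    have hα0 : 0 < (1 - μ)⁻¹ := inv_pos.2 (by linarith)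
    refine h (1 - μ)⁻¹ ⟨hα0.le, inv_le_one_of_one_le₀ (by linarith)⟩ ?_
    rw [segment_eq _ _ hαμ, det_smul, hdet, mul_zero]
  · rintro h α ⟨hα0, hα1⟩
    rcases hα0.eq_or_lt with rfl | hα0
    · simp
    have hαμ : α * (1 - (α - 1) / α) = 1 := by field_simp; ring
    rw [segment_eq _ _ hαμ, det_smul]
    refine mul_ne_zero (pow_ne_zero _ (neg_ne_zero.2 hα0.ne')) (h _ ?_)
    exact div_nonpos_of_nonpos_of_nonneg (by linarith) hα0.le

theorem det_smul_add_one_sub_smul_pos {M : Matrix ι ι ℝ}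
    (h : ∀ α ∈ Set.Icc (0 : ℝ) 1, (α • M + (1 - α) • 1).det ≠ 0) :
    ∀ α ∈ Set.Icc (0 : ℝ) 1, 0 < (α • M + (1 - α) • 1).det := by
  have hcont : Continuous fun α : ℝ => (α • M + (1 - α) • 1).det := by fun_prop
  intro α hα
  exact isPreconnected_Icc.pos_of_forall_ne_zero hcont.continuousOn h
    (Set.left_mem_Icc.2 zero_le_one) (by simp) hα

theorem det_pos_of_forall_nonpos_det_sub_ne_zero {M : Matrix ι ι ℝ}
    (h : ∀ μ ≤ (0 : ℝ), (μ • 1 - M).det ≠ 0) : 0 < M.det := by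
  simpa using det_smul_add_one_sub_smul_pos
    ((forall_det_smul_add_one_sub_smul_ne_zero_iff M).2 h) 1 (Set.right_mem_Icc.2 zero_le_one)

theorem det_one_add_pos_of_forall_norm_lt_one {A : Matrix ι ι ℝ}
    (h : ∀ lam : ℂ, (lam • (1 : Matrix ι ι ℂ) - A.map ofReal).det = 0 → ‖lam‖ < 1) :
    0 < (1 + A).det := by
  refine det_pos_of_forall_nonpos_det_sub_ne_zero fun μ hμ hdet => ?_
  have hdetC : (((μ - 1 : ℝ) : ℂ) • (1 : Matrix ι ι ℂ) - A.map ofReal).det = 0 := by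
    have hmap : ofRealHom.mapMatrix (μ • 1 - (1 + A)) = ((μ - 1 : ℝ) : ℂ) • 1 - A.map ofReal := by
      ext i j
      by_cases hij : i = j <;> simp [one_apply, hij]; ring
    rw [← hmap, ← ofRealHom.map_det, hdet, map_zero]
  have := h _ hdetC
  rw [norm_real, Real.norm_eq_abs, abs_of_neg (by linarith)] at this
  linarith

end

theorem lemma2_det_pos_iff_no_neg_eigenvalue (n : ℕ) (A₁ A₂ : Matrix (Fin n) (Fin n) ℝ)
    (h₁ : ∀ lam : ℂ, Matrix.det (lam • (1 : Matrix (Fin n) (Fin n) ℂ) - A₁.map Complex.ofReal) = 0 →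
      ‖lam‖ < 1)
    (h₂ : ∀ lam : ℂ, Matrix.det (lam • (1 : Matrix (Fin n) (Fin n) ℂ) - A₂.map Complex.ofReal) = 0 →
      ‖lam‖ < 1) :
    (∀ α ∈ Set.Icc (0 : ℝ) 1,
        0 < Matrix.det (α • A₁ + (1 - α) • A₂ + 1)) ↔
      ¬ ∃ lam : ℝ, lam < 0 ∧
        Matrix.det (lam • (1 : Matrix (Fin n) (Fin n) ℝ) - (1 + A₁) * (1 + A₂)⁻¹) = 0 := by
  set M := (1 + A₁) * (1 + A₂)⁻¹
  have hd₁ := det_one_add_pos_of_forall_norm_lt_one h₁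
  have hd₂ := det_one_add_pos_of_forall_norm_lt_one h₂
  have hM : M * (1 + A₂) = 1 + A₁ :=
    nonsing_inv_mul_cancel_right _ _ (isUnit_iff_ne_zero.2 hd₂.ne')
  have hdetM : M.det ≠ 0 := left_ne_zero_of_mul (by rw [← det_mul, hM]; exact hd₁.ne')
  have hdet (α : ℝ) :
      (α • A₁ + (1 - α) • A₂ + 1).det = (α • M + (1 - α) • 1).det * (1 + A₂).det := by
    rw [← det_mul, add_mul, smul_mul, hM, smul_mul, one_mul]
    congr 1
    module
  simp_rw [hdet]
  constructor
  · rintro hpos ⟨μ, hμ, hμM⟩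
    refine (forall_det_smul_add_one_sub_smul_ne_zero_iff M).1 (fun α hα => ?_) μ hμ.le hμM
    exact (pos_of_mul_pos_left (hpos α hα) hd₂.le).ne'
  · intro hno α hα
    refine mul_pos (det_smul_add_one_sub_smul_pos ?_ α hα) hd₂
    refine (forall_det_smul_add_one_sub_smul_ne_zero_iff M).2 fun μ hμ => ?_
    rcases hμ.lt_or_eq with hμ | rfl
    · exact fun hμM => hno ⟨μ, hμ, hμM⟩
    · simpa [det_neg] using hdetM
end

section
/- Let A₁, A₂ be Schur stable n×n real matrices and C(α) = αA₁ + (1−α)A₂. Then −1 is not an eigenvalue of C(α) for any α ∈ [0,1] if and only if (I + A₁)(I + A₂)⁻¹ has no negative real eigenvalue. -/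
/-!
Write `Bᵢ = I + Aᵢ`, so that `C(α) + I = α B₁ + (1 - α) B₂`. Schur stability makes `B₁` and `B₂`
invertible, which settles the endpoints `α = 0, 1`. For `0 < α < 1` put `μ = (α - 1) / α < 0`; then
`α B₁ + (1 - α) B₂ = -α (μ B₂ - B₁) = -α (μ I - B₁ B₂⁻¹) B₂`, and `α ↦ μ` maps `(0, 1)` onto
`(-∞, 0)`. Hence `C(α) + I` is singular for some `α ∈ [0, 1]` exactly when `B₁ B₂⁻¹` has a
negative eigenvalue.
-/

open Matrix Complex

variable {ι : Type*} [Fintype ι] [DecidableEq ι]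

lemma det_smul_sub_eq_det_smul_one_sub_mul_inv {R : Type*} [CommRing R]
    (A B : Matrix ι ι R) (hB : IsUnit B.det) (μ : R) :
    det (μ • B - A) = det (μ • (1 : Matrix ι ι R) - A * B⁻¹) * det B := by
  rw [← det_mul, sub_mul, smul_mul, Matrix.one_mul, Matrix.mul_assoc, nonsing_inv_mul _ hB,
    Matrix.mul_one]

lemma det_smul_add_one_sub_smul_eq {R : Type*} [CommRing R]
    (B₁ B₂ : Matrix ι ι R) (hB₂ : IsUnit B₂.det) {α μ : R} (hαμ : α * μ = α - 1) :
    det (α • B₁ + (1 - α) • B₂) =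
      (-α) ^ Fintype.card ι * det (μ • (1 : Matrix ι ι R) - B₁ * B₂⁻¹) * det B₂ := by
  have hcomb : α • B₁ + (1 - α) • B₂ = (-α) • (μ • B₂ - B₁) := by
    rw [smul_sub, smul_smul, neg_mul, hαμ, neg_sub]
    module
  rw [hcomb, det_smul, det_smul_sub_eq_det_smul_one_sub_mul_inv _ _ hB₂, mul_assoc]

lemma det_one_add_ne_zero_of_spectrum_subset_ball (A : Matrix ι ι ℝ)
    (hA : ∀ μ : ℂ, det (μ • (1 : Matrix ι ι ℂ) - A.map ofReal) = 0 → ‖μ‖ < 1) :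
    det (1 + A) ≠ 0 := by
  intro h
  have hmap : ((1 + A).map ofReal).det = ((1 + A).det : ℂ) := (ofRealHom.map_det _).symm
  have : det ((-1 : ℂ) • (1 : Matrix ι ι ℂ) - A.map ofReal) = 0 := by
    rw [neg_one_smul, ← neg_add', det_neg, ← Matrix.map_one _ ofReal_zero ofReal_one,
      ← Matrix.map_add _ ofReal_add, hmap, h, ofReal_zero, mul_zero]
  simpa using hA (-1) this

theorem cor22_no_eigenvalue_neg_one_iff (n : ℕ) (A₁ A₂ : Matrix (Fin n) (Fin n) ℝ)
    (h₁ : ∀ lam : ℂ, Matrix.det (lam • (1 : Matrix (Fin n) (Fin n) ℂ) - A₁.map Complex.ofReal) = 0 →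
      ‖lam‖ < 1)
    (h₂ : ∀ lam : ℂ, Matrix.det (lam • (1 : Matrix (Fin n) (Fin n) ℂ) - A₂.map Complex.ofReal) = 0 →
      ‖lam‖ < 1) :
    (∀ α ∈ Set.Icc (0 : ℝ) 1,
        Matrix.det ((α • A₁ + (1 - α) • A₂) + 1) ≠ 0) ↔
      ¬ ∃ lam : ℝ, lam < 0 ∧
        Matrix.det (lam • (1 : Matrix (Fin n) (Fin n) ℝ) - (1 + A₁) * (1 + A₂)⁻¹) = 0 := by
  have hB₁ := det_one_add_ne_zero_of_spectrum_subset_ball A₁ h₁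
  have hB₂ := det_one_add_ne_zero_of_spectrum_subset_ball A₂ h₂
  have hshift : ∀ α : ℝ, α • A₁ + (1 - α) • A₂ + 1 = α • (1 + A₁) + (1 - α) • (1 + A₂) :=
    fun α => by module
  simp only [hshift]
  constructor
  · rintro H ⟨μ, hμ, hdet⟩
    have hμ' : 0 < 1 - μ := by linarith
    refine H (1 / (1 - μ)) ⟨by positivity, by rw [div_le_one hμ']; linarith⟩ ?_
    rw [det_smul_add_one_sub_smul_eq _ _ hB₂.isUnit (μ := μ) (by field_simp; ring), hdet,
      mul_zero, zero_mul]
  · rintro H α ⟨hα0, hα1⟩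
    rcases hα0.eq_or_lt with rfl | hα0
    · simpa using hB₂
    rcases hα1.eq_or_lt with rfl | hα1
    · simpa using hB₁
    rw [det_smul_add_one_sub_smul_eq _ _ hB₂.isUnit (μ := (α - 1) / α) (by field_simp)]
    have hμ : (α - 1) / α < 0 := div_neg_of_neg_of_pos (by linarith) hα0
    exact mul_ne_zero (mul_ne_zero (pow_ne_zero _ (neg_ne_zero.2 hα0.ne')) fun h => H ⟨_, hμ, h⟩)
      hB₂
end

section
/- If an n×n real matrix A has an eigenvalue λ ∈ ℂ with |λ| = 1 and λ ≠ ±1, then det(I − A·A) = 0, where A·A is the bialternate product of A with itself. -/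
/-!
Let `v` be an eigenvector of `A` for `λ`. Since `A` is real, `v̄` is an eigenvector for `λ̄`, and
`λ̄ ≠ λ` because `λ` is not real, so `v` and `v̄` are independent and `w = v ∧ v̄ ≠ 0`. The
bialternate product `A·A` acts on `w` as the second compound matrix, i.e. as `A ∧ A`, so
`(A·A) w = Av ∧ Av̄ = λλ̄ w = w`, and `1 - A·A` is singular.
-/

open Matrix Complex

/-- The bialternate product of two `n × n` real matrices, indexed by pairs `(i,j)` with `i < j`. -/
noncomputable def bialt {n : ℕ} (A B : Matrix (Fin n) (Fin n) ℝ) :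
    Matrix {p : Fin n × Fin n // p.1 < p.2} {p : Fin n × Fin n // p.1 < p.2} ℝ :=
  fun p q => (1 / 2) *
    ((A p.1.1 q.1.1 * B p.1.2 q.1.2 - A p.1.1 q.1.2 * B p.1.2 q.1.1) +
     (B p.1.1 q.1.1 * A p.1.2 q.1.2 - B p.1.1 q.1.2 * A p.1.2 q.1.1))

theorem Finset.sum_lt_pairs_add_swap {ι M : Type*} [Fintype ι] [LinearOrder ι]
    [AddCommMonoid M] (H : ι → ι → M) (hdiag : ∀ i, H i i = 0) :
    ∑ q : {p : ι × ι // p.1 < p.2}, (H q.1.1 q.1.2 + H q.1.2 q.1.1) = ∑ i, ∑ j, H i j := by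
  have hswap : ∑ p : ι × ι, (if p.2 < p.1 then H p.1 p.2 else 0)
      = ∑ p : ι × ι, (if p.1 < p.2 then H p.2 p.1 else 0) :=
    Fintype.sum_equiv (Equiv.prodComm _ _) _ _ fun _ => rfl
  have hsplit (p : ι × ι) :
      H p.1 p.2 = (if p.1 < p.2 then H p.1 p.2 else 0) + (if p.2 < p.1 then H p.1 p.2 else 0) := by
    rcases lt_trichotomy p.1 p.2 with h | h | h
    · simp [h, h.not_gt]
    · simp [h, hdiag]
    · simp [h, h.not_gt]
  rw [← Fintype.sum_prod_type', ← Finset.sum_subtype (univ.filter fun p : ι × ι => p.1 < p.2)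
    (by simp) fun p => H p.1 p.2 + H p.2 p.1, Finset.sum_filter]
  rw [Finset.sum_congr rfl fun p _ => hsplit p, Finset.sum_add_distrib, hswap,
    ← Finset.sum_add_distrib]
  simp only [ite_add_ite, add_zero]

theorem Matrix.det_one_sub_eq_zero_of_mulVec_eq_self {ι R : Type*} [Fintype ι] [DecidableEq ι]
    [CommRing R] [IsDomain R] {M : Matrix ι ι R} {w : ι → R} (hw : M *ᵥ w = w) (hw0 : w ≠ 0) :
    (1 - M).det = 0 :=
  exists_mulVec_eq_zero_iff.1 ⟨w, hw0, by rw [sub_mulVec, one_mulVec, hw, sub_self]⟩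

section Compound

variable {ι R : Type*} [LinearOrder ι] [CommRing R]

def Matrix.secondCompound (B : Matrix ι ι R) :
    Matrix {p : ι × ι // p.1 < p.2} {p : ι × ι // p.1 < p.2} R :=
  fun p q => B p.1.1 q.1.1 * B p.1.2 q.1.2 - B p.1.1 q.1.2 * B p.1.2 q.1.1

/-- The coordinates of `x ∧ y` in the basis `eᵢ ∧ eⱼ`, `i < j`, of the second exterior power. -/
def wedge (x y : ι → R) : {p : ι × ι // p.1 < p.2} → R :=
  fun p => x p.1.1 * y p.1.2 - x p.1.2 * y p.1.1

theorem wedge_smul_smul (a b : R) (x y : ι → R) :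
    wedge (a • x) (b • y) = (a * b) • wedge x y := by
  ext p
  simp only [wedge, Pi.smul_apply, smul_eq_mul]
  ring

variable [Fintype ι]

theorem Matrix.secondCompound_mulVec_wedge (B : Matrix ι ι R) (x y : ι → R) :
    B.secondCompound *ᵥ wedge x y = wedge (B *ᵥ x) (B *ᵥ y) := by
  ext p
  simp only [mulVec, dotProduct, wedge, secondCompound]
  rw [Finset.sum_mul_sum, Finset.sum_mul_sum, ← Finset.sum_sub_distrib]
  simp_rw [← Finset.sum_sub_distrib]
  -- Cauchy–Binet for `2 × 2` minors: the pair `j < k` carries the `(j, k)` and `(k, j)` terms.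
  rw [← Finset.sum_lt_pairs_add_swap]
  · exact Finset.sum_congr rfl fun q _ => by ring
  · exact fun j => by ring

theorem wedge_ne_zero_of_eigenvalue_ne [IsDomain R] {B : Matrix ι ι R} {x y : ι → R}
    {a b : R} (hx : B *ᵥ x = a • x) (hy : B *ᵥ y = b • y) (hab : a ≠ b) (hx0 : x ≠ 0)
    (hy0 : y ≠ 0) : wedge x y ≠ 0 := by
  intro hw
  have hcross (i j : ι) : x i * y j = x j * y i := by
    rcases lt_trichotomy i j with h | rfl | h
    · simpa [wedge, sub_eq_zero] using congrFun hw ⟨(i, j), h⟩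
    · rfl
    · simpa [wedge, sub_eq_zero, eq_comm] using congrFun hw ⟨(j, i), h⟩
  obtain ⟨i, hi⟩ := Function.ne_iff.1 hx0
  have hdep : x i • y = y i • x := funext fun j => by simp [hcross i j, mul_comm]
  have hscale : (x i * b) • y = (x i * a) • y := by
    calc (x i * b) • y = B *ᵥ (x i • y) := by rw [mulVec_smul, hy, smul_smul]
      _ = a • (x i • y) := by rw [hdep, mulVec_smul, hx, smul_comm]
      _ = (x i * a) • y := by rw [smul_smul, mul_comm]
  exact hab (mul_left_cancel₀ hi (smul_left_injective R hy0 hscale)).symm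

end Compound

theorem Matrix.map_ofReal_mulVec_star {ι : Type*} [Fintype ι] (A : Matrix ι ι ℝ) (v : ι → ℂ) :
    A.map ofReal *ᵥ star v = star (A.map ofReal *ᵥ v) := by
  ext i
  simp [mulVec, dotProduct]

theorem Complex.star_ne_self_of_norm_eq_one {z : ℂ} (hmod : ‖z‖ = 1) (h1 : z ≠ 1)
    (h2 : z ≠ -1) : star z ≠ z := by
  intro hz
  have hre : (z.re : ℂ) = z := conj_eq_iff_re.1 hz
  rw [← hre, norm_real, Real.norm_eq_abs] at hmod
  rcases abs_eq zero_le_one |>.1 hmod with h | h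
  · exact h1 (by rw [← hre, h, ofReal_one])
  · exact h2 (by rw [← hre, h, ofReal_neg, ofReal_one])

theorem bialt_self_map_ofReal {n : ℕ} (A : Matrix (Fin n) (Fin n) ℝ) :
    (bialt A A).map ofReal = (A.map ofReal).secondCompound := by
  ext p q
  simp only [bialt, secondCompound, map_apply]
  push_cast
  ring

theorem det_one_sub_bialt_eq_zero (n : ℕ) (A : Matrix (Fin n) (Fin n) ℝ) (lam : ℂ)
    (hmod : ‖lam‖ = 1) (h1 : lam ≠ 1) (h2 : lam ≠ -1)
    (heig : Matrix.det (lam • (1 : Matrix (Fin n) (Fin n) ℂ) - A.map Complex.ofReal) = 0) :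
    Matrix.det (1 - bialt A A) = 0 := by
  obtain ⟨v, hv0, hv⟩ := exists_mulVec_eq_zero_iff.2 heig
  have hAv : A.map ofReal *ᵥ v = lam • v := by
    rwa [sub_mulVec, smul_mulVec, one_mulVec, sub_eq_zero, eq_comm] at hv
  have hAv' : A.map ofReal *ᵥ star v = star lam • star v := by
    rw [map_ofReal_mulVec_star, hAv, star_smul]
  have hunit : lam * star lam = 1 := by
    rw [← starRingEnd_apply, mul_conj', hmod, ofReal_one, one_pow]
  have hw : (A.map ofReal).secondCompound *ᵥ wedge v (star v) = wedge v (star v) := by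
    rw [secondCompound_mulVec_wedge, hAv, hAv', wedge_smul_smul, hunit, one_smul]
  have hw0 : wedge v (star v) ≠ 0 := wedge_ne_zero_of_eigenvalue_ne hAv hAv'
    (star_ne_self_of_norm_eq_one hmod h1 h2).symm hv0 (star_ne_zero.2 hv0)
  have hdet : ((1 - bialt A A).map ofReal).det = 0 := by
    rw [Matrix.map_sub _ ofReal_sub, Matrix.map_one _ ofReal_zero ofReal_one,
      bialt_self_map_ofReal]
    exact det_one_sub_eq_zero_of_mulVec_eq_self hw hw0
  exact ofReal_eq_zero.1 ((ofRealHom.map_det _).trans hdet)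
end

section
/- Suppose F₀ is invertible (d×d), F₁, F₂ ∈ ℝ^{d×d}, and let M = [[0, I_d], [−F₀⁻¹F₂, −F₀⁻¹F₁]]. Then det(F₀ + αF₁ + α²F₂) ≠ 0 for all α ∈ (0,1] if and only if M has no real eigenvalue in [1,∞). -/
/-!
For `μ ≠ 0`, taking the Schur complement of the invertible block `μ • 1` gives
`det (μ • 1 - M) = det (μ² • 1 + μ • F₀⁻¹ F₁ + F₀⁻¹ F₂) = μ^(2d) det F₀⁻¹ det (F₀ + μ⁻¹ F₁ + μ⁻² F₂)`,
so `μ ≥ 1` is an eigenvalue of `M` exactly when `α = μ⁻¹ ∈ (0, 1]` makes the pencil singular.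
-/

open Matrix

section

variable {K n : Type*} [Field K] [Fintype n] [DecidableEq n]

theorem det_smul_one_sub_companion (A B : Matrix n n K) {μ : K} (hμ : μ ≠ 0) :
    det (μ • (1 : Matrix (n ⊕ n) (n ⊕ n) K) - fromBlocks 0 1 (-A) (-B)) =
      det (μ ^ 2 • (1 : Matrix n n K) + μ • B + A) := by
  have hμ1 : (μ • (1 : Matrix n n K)) * (μ⁻¹ • 1) = 1 := by
    rw [smul_mul_smul_comm, one_mul, mul_inv_cancel₀ hμ, one_smul]
  let := invertibleOfRightInverse _ _ hμ1
  rw [← fromBlocks_one, fromBlocks_smul, smul_zero, sub_eq_add_neg, fromBlocks_neg,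
    fromBlocks_add, neg_zero, add_zero, det_fromBlocks₁₁, invOf_eq_right_inv hμ1, det_smul,
    det_one, mul_one, ← det_smul]
  congr 1
  simp only [neg_neg, zero_add, Matrix.mul_smul, Matrix.mul_one, Matrix.mul_neg, sub_neg_eq_add]
  match_scalars <;> field_simp

theorem det_smul_one_sub_companion_eq_zero_iff (F₀ F₁ F₂ : Matrix n n K) (hF₀ : IsUnit F₀.det)
    {μ : K} (hμ : μ ≠ 0) :
    det (μ • (1 : Matrix (n ⊕ n) (n ⊕ n) K) - fromBlocks 0 1 (-(F₀⁻¹ * F₂)) (-(F₀⁻¹ * F₁))) = 0 ↔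
      det (F₀ + μ⁻¹ • F₁ + μ⁻¹ ^ 2 • F₂) = 0 := by
  have h_pencil : μ ^ 2 • (1 : Matrix n n K) + μ • (F₀⁻¹ * F₁) + F₀⁻¹ * F₂ =
      μ ^ 2 • (F₀⁻¹ * (F₀ + μ⁻¹ • F₁ + μ⁻¹ ^ 2 • F₂)) := by
    rw [Matrix.mul_add, Matrix.mul_add, nonsing_inv_mul _ hF₀, Matrix.mul_smul, Matrix.mul_smul]
    match_scalars <;> field_simp
  rw [det_smul_one_sub_companion _ _ hμ, h_pencil, det_smul, det_mul]
  simp [hμ, hF₀.ne_zero]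

end

theorem quadratic_pencil_nonsing_iff_no_eigenvalue_ge_one (d : ℕ)
    (F₀ F₁ F₂ : Matrix (Fin d) (Fin d) ℝ) (hF₀ : IsUnit F₀.det) :
    (∀ α ∈ Set.Ioc (0 : ℝ) 1,
        Matrix.det (F₀ + α • F₁ + α ^ 2 • F₂) ≠ 0) ↔
      ¬ ∃ μ : ℝ, 1 ≤ μ ∧
        Matrix.det (μ • (1 : Matrix (Fin d ⊕ Fin d) (Fin d ⊕ Fin d) ℝ) -
          Matrix.fromBlocks 0 1 (-(F₀⁻¹ * F₂)) (-(F₀⁻¹ * F₁))) = 0 := by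
  constructor
  · rintro h ⟨μ, hμ, h_det⟩
    have hμ₀ : 0 < μ := zero_lt_one.trans_le hμ
    exact h μ⁻¹ ⟨inv_pos.2 hμ₀, inv_le_one_of_one_le₀ hμ⟩
      ((det_smul_one_sub_companion_eq_zero_iff F₀ F₁ F₂ hF₀ hμ₀.ne').1 h_det)
  · rintro h α ⟨hα₀, hα₁⟩ h_det
    refine h ⟨α⁻¹, (one_le_inv₀ hα₀).2 hα₁, ?_⟩
    rwa [det_smul_one_sub_companion_eq_zero_iff F₀ F₁ F₂ hF₀ (inv_ne_zero hα₀.ne'), inv_inv]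
end

section
/- Let A₀ ∈ ℝ^{n×n}, b ∈ ℝⁿ, and c₁,…,c_N ∈ ℝⁿ, and set Aᵢ = A₀ + b·cᵢᵀ. For any convex combination A = α₁A₁ + ⋯ + α_N A_N (αᵢ ≥ 0, Σαᵢ = 1), the characteristic polynomial satisfies p_A(s) = α₁p_{A₁}(s) + ⋯ + α_N p_{A_N}(s), where p_M(s) = det(sI − M). -/
/-!
By the matrix determinant lemma, `det (M + u vᵀ) = det M + vᵀ adj(M) u` is affine in `v`.
Applied to `M = sI - A₀`, the characteristic polynomial of `A₀ + b cᵀ` is an affine function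
of `c`, and a convex combination of the `A₀ + b cᵢᵀ` is `A₀ + b (∑ αᵢ cᵢ)ᵀ`; affine maps
commute with combinations whose weights sum to one.
-/

open Matrix Polynomial

namespace Matrix

theorem map_vecMulVec {m n R S : Type*} [NonAssocSemiring R] [NonAssocSemiring S]
    (f : R →+* S) (u : m → R) (v : n → R) :
    (vecMulVec u v).map f = vecMulVec (f ∘ u) (f ∘ v) := by
  ext i j
  simp [vecMulVec_apply]

theorem sum_smul_add_vecMulVec {ι m n R : Type*} [CommRing R] {s : Finset ι} {α : ι → R}
    (hα : ∑ i ∈ s, α i = 1) (A : Matrix m n R) (u : m → R) (c : ι → n → R) :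
    ∑ i ∈ s, α i • (A + vecMulVec u (c i)) = A + vecMulVec u (∑ i ∈ s, α i • c i) := by
  simp only [smul_add, Finset.sum_add_distrib, ← Finset.sum_smul, hα, one_smul, ← vecMulVec_smul]
  congr 1
  ext i j
  simp [vecMulVec_apply, Finset.mul_sum, Matrix.sum_apply, mul_left_comm]

variable {n R : Type*} [Fintype n] [DecidableEq n] [CommRing R]

theorem det_add_vecMulVec_of_isUnit {M : Matrix n n R} (hM : IsUnit M.det) (u v : n → R) :
    (M + vecMulVec u v).det = M.det + v ⬝ᵥ (M.adjugate *ᵥ u) := by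
  have hfactor : M + vecMulVec u v = M * (1 + vecMulVec (M⁻¹ *ᵥ u) v) := by
    rw [mul_add, mul_one, mul_vecMulVec, mulVec_mulVec, mul_nonsing_inv _ hM, one_mulVec]
  rw [hfactor, det_mul, vecMulVec_eq (Fin 1), det_one_add_replicateCol_mul_replicateRow,
    inv_def, smul_mulVec, dotProduct_smul, smul_eq_mul, mul_add, mul_one,
    Ring.mul_inverse_cancel_left _ _ hM]

theorem det_add_vecMulVec_of_det_ne_zero [IsDomain R] {M : Matrix n n R} (hM : M.det ≠ 0)
    (u v : n → R) :
    (M + vecMulVec u v).det = M.det + v ⬝ᵥ (M.adjugate *ᵥ u) := by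
  let f : R →+* FractionRing R := algebraMap R (FractionRing R)
  have hf : Function.Injective f := IsFractionRing.injective R (FractionRing R)
  have hdet : IsUnit (f.mapMatrix M).det := by
    rw [← RingHom.map_det]
    exact ((map_ne_zero_iff f hf).mpr hM).isUnit
  have hmap : f.mapMatrix (M + vecMulVec u v) = f.mapMatrix M + vecMulVec (f ∘ u) (f ∘ v) := by
    rw [map_add, RingHom.mapMatrix_apply f (vecMulVec u v), map_vecMulVec]
  apply hf
  rw [RingHom.map_det, hmap, det_add_vecMulVec_of_isUnit hdet, ← RingHom.map_adjugate,
    map_add, RingHom.map_det, RingHom.map_dotProduct]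
  congr 2
  funext i
  exact (RingHom.map_mulVec f _ u i).symm

theorem charmatrix_add (A B : Matrix n n R) :
    charmatrix (A + B) = charmatrix A - C.mapMatrix B := by
  rw [charmatrix, charmatrix, map_add, sub_add_eq_sub_sub]

theorem charpoly_add_vecMulVec [IsDomain R] (A : Matrix n n R) (u v : n → R) :
    (A + vecMulVec u v).charpoly =
      A.charpoly - (C ∘ v) ⬝ᵥ ((charmatrix A).adjugate *ᵥ (C ∘ u)) := by
  have hchar : charmatrix (A + vecMulVec u v) = charmatrix A + vecMulVec (-(C ∘ u)) (C ∘ v) := by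
    rw [charmatrix_add, RingHom.mapMatrix_apply, map_vecMulVec, neg_vecMulVec, sub_eq_add_neg]
  rw [charpoly, hchar, det_add_vecMulVec_of_det_ne_zero A.charpoly_monic.ne_zero, ← charpoly,
    mulVec_neg, dotProduct_neg, ← sub_eq_add_neg]

theorem charpoly_add_vecMulVec_sum_smul [IsDomain R] {ι : Type*} {s : Finset ι} {α : ι → R}
    (hα : ∑ i ∈ s, α i = 1) (A : Matrix n n R) (u : n → R) (c : ι → n → R) :
    (A + vecMulVec u (∑ i ∈ s, α i • c i)).charpoly =
      ∑ i ∈ s, C (α i) * (A + vecMulVec u (c i)).charpoly := by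
  have hC : C ∘ (∑ i ∈ s, α i • c i) = ∑ i ∈ s, C (α i) • (C ∘ c i) := by
    funext j
    simp [Finset.sum_apply, map_sum]
  simp only [charpoly_add_vecMulVec, mul_sub, Finset.sum_sub_distrib, ← Finset.sum_mul, ← map_sum,
    hα, map_one, one_mul, hC, sum_dotProduct, smul_dotProduct, smul_eq_mul]

end Matrix

theorem charpoly_convex_comb_rank_one_general (n N : ℕ) (A₀ : Matrix (Fin n) (Fin n) ℝ)
    (b : Fin n → ℝ) (c : Fin N → Fin n → ℝ) (α : Fin N → ℝ)
    (hα1 : ∑ i, α i = 1) :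
    (∑ i, α i • (A₀ + Matrix.vecMulVec b (c i))).charpoly =
      ∑ i, Polynomial.C (α i) * (A₀ + Matrix.vecMulVec b (c i)).charpoly := by
  rw [sum_smul_add_vecMulVec hα1, charpoly_add_vecMulVec_sum_smul hα1]

theorem charpoly_convex_comb_rank_one (n N : ℕ) (A₀ : Matrix (Fin n) (Fin n) ℝ)
    (b : Fin n → ℝ) (c : Fin N → Fin n → ℝ) (α : Fin N → ℝ)
    (hα0 : ∀ i, 0 ≤ α i) (hα1 : ∑ i, α i = 1) :
    (∑ i, α i • (A₀ + Matrix.vecMulVec b (c i))).charpoly =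
      ∑ i, Polynomial.C (α i) * (A₀ + Matrix.vecMulVec b (c i)).charpoly :=
  charpoly_convex_comb_rank_one_general n N A₀ b c α hα1
end
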